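/- Let 𝒯 be a tree-decomposition of a finite connected graph G, r : V → ℕ, B a bag of 𝒯, and let T_B be an r-covering subtree of 𝒯 containing B with the minimum number of bags among all such subtrees, where T_B has at least two bags. Then for each leaf B' ≠ B of T_B, there exists a minimum r-covering subtree T_r of 𝒯 (one with the fewest bags among all r-covering subtrees of 𝒯) that contains B'. -/

import Mathlib

open SimpleGraph

/-- A tree-decomposition of the graph `G`, with bags indexed by `ι`:
a tree on `ι` together with a bag `bag i ⊆ V` for each node such that every vertex
lies in some bag, every edge of `G` has both endpoints in a common bag, and for each
vertex the bags containing it induce a subtree. -/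
structure TreeDecomp {V : Type} (G : SimpleGraph V) (ι : Type) where
  tree : SimpleGraph ι
  isTree : tree.IsTree
  bag : ι → Set V
  covers_vertex : ∀ v : V, ∃ i : ι, v ∈ bag i
  covers_edge : ∀ ⦃u v : V⦄, G.Adj u v → ∃ i : ι, u ∈ bag i ∧ v ∈ bag i
  bags_connected : ∀ v : V, (tree.induce {i : ι | v ∈ bag i}).Connected

variable {V ι : Type}

/-- The tree-decomposition has breadth `ρ`: each bag is contained in the
`ρ`-neighbourhood of some vertex of `G`. -/
def TreeDecomp.HasBreadth {G : SimpleGraph V} (TD : TreeDecomp G ι) (ρ : ℕ) : Prop :=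
  ∀ i : ι, ∃ c : V, ∀ u ∈ TD.bag i, G.dist u c ≤ ρ

/-- The tree-decomposition has length `lam`: any two vertices of a common bag are at
distance at most `lam` in `G`. -/
def TreeDecomp.HasLength {G : SimpleGraph V} (TD : TreeDecomp G ι) (lam : ℕ) : Prop :=
  ∀ i : ι, ∀ u ∈ TD.bag i, ∀ v ∈ TD.bag i, G.dist u v ≤ lam

/-- `G` admits a (finite) tree-decomposition of length `lam`. -/
def HasTDOfLength (G : SimpleGraph V) (lam : ℕ) : Prop :=
  ∃ (ι : Type) (_ : Fintype ι) (TD : TreeDecomp G ι), TD.HasLength lam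

/-- The tree-length of `G` equals `lam`: `lam` is the minimum length over all
tree-decompositions of `G`. -/
def TreeLengthEq (G : SimpleGraph V) (lam : ℕ) : Prop :=
  HasTDOfLength G lam ∧ ∀ lam' : ℕ, HasTDOfLength G lam' → lam ≤ lam'

/-- `D` is an `(r+φ)`-dominating set of `G`: every vertex `v` is within distance
`r v + φ` of `D`. -/
def IsRPhiDomSet (G : SimpleGraph V) (r : V → ℕ) (φ : ℕ) (D : Set V) : Prop :=
  ∀ v : V, ∃ u ∈ D, G.dist v u ≤ r v + φ

/-- `S` induces a connected subgraph of `G`. -/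
def IsConnSet (G : SimpleGraph V) (S : Set V) : Prop := (G.induce S).Connected

/-- `T'` is an `(r+φ)`-covering subtree of the tree-decomposition `TD`: a connected
set of bags such that every vertex `v` of `G` is within distance `r v + φ` of some
bag of `T'`. -/
def IsCovSubtree {G : SimpleGraph V} (TD : TreeDecomp G ι) (r : V → ℕ) (φ : ℕ)
    (T' : Set ι) : Prop :=
  (TD.tree.induce T').Connected ∧
    ∀ v : V, ∃ i ∈ T', ∃ u ∈ TD.bag i, G.dist v u ≤ r v + φ

/-- The degree of the bag `i` inside the subtree `T'` of the decomposition tree. -/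
noncomputable def bagDegree {G : SimpleGraph V} (TD : TreeDecomp G ι)
    (T' : Set ι) (i : ι) : ℕ :=
  {j : ι | j ∈ T' ∧ TD.tree.Adj i j}.ncard

/-!
Write `N v` for the set of bags at distance at most `r v` from `v`. Since a tree-decomposition
separates `G` along tree paths, each `N v` is a subtree, and a covering subtree is a subtree
meeting every `N v`. As `T_B` is minimal, the subtree `T_B \ {B'}` is not covering, so some
`N v₀` meets `T_B` only in `B'`. Now let `T_r` be a covering subtree avoiding `B'`, let `X` be its
gate (closest bag) from `B'`, and `Y` the gate of `T_B` from `X`. The subtree `N v₀` contains `B'`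
and meets `T_r`, so it contains `X`; hence `X ∉ T_B`. Every `N v` meets both `T_B` and `T_r`, so
it contains `X` and then `Y`; in particular `Y ∈ N v₀ ∩ T_B = {B'}`. So either every minimum
covering subtree contains `B'`, or `{B'}` alone is covering.
-/

namespace SimpleGraph

theorem Walk.IsPath.append {α : Type*} {G : SimpleGraph α} {a b c : α} {p : G.Walk a b}
    {q : G.Walk b c} (hp : p.IsPath) (hq : q.IsPath)
    (h : ∀ x ∈ p.support, x ∈ q.support → x = b) : (p.append q).IsPath := by
  rw [Walk.isPath_def, Walk.support_append, List.nodup_append]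
  refine ⟨hp.support_nodup, hq.support_nodup.sublist (List.tail_sublist _), ?_⟩
  rintro x hxp _ hxq rfl
  obtain rfl := h x hxp (List.mem_of_mem_tail hxq)
  have := hq.support_nodup
  rw [← q.cons_tail_support, List.nodup_cons] at this
  exact this.1 hxq

namespace IsTree

variable {α : Type*} {T : SimpleGraph α} (hT : T.IsTree)

noncomputable def path (a b : α) : T.Walk a b :=
  (hT.existsUnique_path a b).choose

theorem isPath_path (a b : α) : (hT.path a b).IsPath :=
  (hT.existsUnique_path a b).choose_spec.1

theorem eq_path {a b : α} {p : T.Walk a b} (hp : p.IsPath) : p = hT.path a b :=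
  (hT.existsUnique_path a b).choose_spec.2 p hp

theorem support_path_reverse (a b : α) :
    (hT.path b a).support = (hT.path a b).support.reverse := by
  rw [← hT.eq_path (hT.isPath_path a b).reverse, Walk.support_reverse]

theorem mem_support_path_or {a b x : α} (hx : x ∈ (hT.path a b).support) (c : α) :
    x ∈ (hT.path a c).support ∨ x ∈ (hT.path c b).support := by
  classical
  rw [← hT.eq_path ((hT.path a c).append (hT.path c b)).bypass_isPath] at hx
  exact (Walk.mem_support_append_iff _ _).1 (Walk.support_bypass_subset_support _ hx)

def IsConvex (S : Set α) : Prop :=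
  ∀ ⦃a b⦄, a ∈ S → b ∈ S → ∀ x ∈ (hT.path a b).support, x ∈ S

theorem isConvex_of_connected {S : Set α} (hS : (T.induce S).Connected) : hT.IsConvex S := by
  classical
  intro a b ha hb x hx
  obtain ⟨w⟩ := hS ⟨a, ha⟩ ⟨b, hb⟩
  have hw : (w.map (Embedding.induce S).toHom).bypass = hT.path a b :=
    hT.eq_path (Walk.bypass_isPath _)
  rw [← hw] at hx
  obtain ⟨y, -, rfl⟩ :=
    List.mem_map.1 (Walk.support_map _ _ ▸ Walk.support_bypass_subset_support _ hx)
  exact y.2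

theorem connected_induce_of_isConvex {S : Set α} (hS : hT.IsConvex S) (hne : S.Nonempty) :
    (T.induce S).Connected := by
  obtain ⟨a, ha⟩ := hne
  refine induce_connected_of_patches a ha fun {b} hb => ?_
  exact ⟨{x | x ∈ (hT.path a b).support}, hS ha hb, Walk.start_mem_support _,
    Walk.end_mem_support _, (hT.path a b).connected_induce_support.preconnected _ _⟩

variable {hT}

theorem IsConvex.diff_singleton {S : Set α} (hS : hT.IsConvex S) {i n : α} (hi : i ∈ S)
    (hin : T.Adj i n) (huniq : ∀ j ∈ S, T.Adj i j → j = n) : hT.IsConvex (S \ {i}) := by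
  have avoid : ∀ a ∈ S, a ≠ i → i ∉ (hT.path a n).support := by
    intro a ha hai hia
    have hn' := hT.isAcyclic.ne_mem_support_of_support_of_adj_of_isPath (hT.isPath_path a n)
      (hT.isPath_path a i) hin.symm hia
    have hpen := (hT.path a i).getVert_mem_support ((hT.path a i).length - 1)
    exact hn' (huniq _ (hS ha hi _ hpen)
      (Walk.adj_penultimate (Walk.not_nil_of_ne hai)).symm ▸ hpen)
  rintro a b ⟨ha, hai⟩ ⟨hb, hbi⟩ x hx
  refine ⟨hS ha hb x hx, ?_⟩
  rintro rfl
  rcases hT.mem_support_path_or hx n with h | h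
  · exact avoid a ha hai h
  · rw [hT.support_path_reverse, List.mem_reverse] at h
    exact avoid b hb hbi h

theorem IsConvex.exists_gate {S : Set α} (hS : hT.IsConvex S) (hne : S.Nonempty) (a : α) :
    ∃ g ∈ S, ∀ s ∈ S, g ∈ (hT.path a s).support := by
  classical
  let f : α → ℕ := fun x => (hT.path a x).length
  have hg := Function.argminOn_mem f S hne
  refine ⟨_, hg, fun s hs => ?_⟩
  set g := Function.argminOn f S hne
  have hmeet : ∀ y ∈ (hT.path a g).support, y ∈ (hT.path g s).support → y = g := by
    intro y hy hy'
    by_contra hyg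
    have hlt := Walk.length_takeUntil_lt_length hy hyg
    rw [hT.eq_path ((hT.isPath_path a g).takeUntil hy)] at hlt
    exact (Function.argminOn_le f S (hS hg hs y hy')).not_gt hlt
  rw [← hT.eq_path ((hT.isPath_path a g).append (hT.isPath_path g s) hmeet)]
  exact (Walk.mem_support_append_iff _ _).2 (Or.inl (Walk.end_mem_support _))

theorem forall_mem_of_unique_mem_of_notMem {β : Type*} {N : β → Set α}
    (hN : ∀ v, hT.IsConvex (N v)) {S S' : Set α} (hS : hT.IsConvex S) (hS' : hT.IsConvex S')
    (hSN : ∀ v, ∃ i ∈ S, i ∈ N v) (hS'N : ∀ v, ∃ i ∈ S', i ∈ N v) {b : α} (hb : b ∈ S)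
    (hbS' : b ∉ S') {v₀ : β} (hv₀ : ∀ i ∈ S, i ∈ N v₀ → i = b) : ∀ v, b ∈ N v := by
  have hbN : b ∈ N v₀ := by
    obtain ⟨i, hi, hiN⟩ := hSN v₀
    exact hv₀ i hi hiN ▸ hiN
  obtain ⟨c, hc, hcN⟩ := hS'N v₀
  obtain ⟨X, hXS', hX⟩ := hS'.exists_gate ⟨c, hc⟩ b
  have hXS : X ∉ S := fun hXS => hbS' (hv₀ X hXS (hN v₀ hbN hcN X (hX c hc)) ▸ hXS')
  have hXN : ∀ v, X ∈ N v := by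
    intro v
    obtain ⟨t, ht, htN⟩ := hSN v
    obtain ⟨s, hs, hsN⟩ := hS'N v
    rcases hT.mem_support_path_or (hX s hs) t with h | h
    · exact absurd (hS hb ht X h) hXS
    · exact hN v htN hsN X h
  obtain ⟨Y, hYS, hY⟩ := hS.exists_gate ⟨b, hb⟩ X
  have hYN : ∀ v, Y ∈ N v := by
    intro v
    obtain ⟨t, ht, htN⟩ := hSN v
    exact hN v (hXN v) htN Y (hY t ht)
  exact hv₀ Y hYS (hYN v₀) ▸ hYN

end IsTree

end SimpleGraph

section

variable {G : SimpleGraph V} {TD : TreeDecomp G ι} {r : V → ℕ} {φ : ℕ}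

theorem IsCovSubtree.isConvex {S : Set ι} (hS : IsCovSubtree TD r φ S) : TD.isTree.IsConvex S :=
  TD.isTree.isConvex_of_connected hS.1

theorem IsCovSubtree.nonempty [Nonempty V] {S : Set ι} (hS : IsCovSubtree TD r φ S) :
    S.Nonempty :=
  let ⟨i, hi, _⟩ := hS.2 (Classical.arbitrary V)
  ⟨i, hi⟩

end

namespace TreeDecomp

variable {G : SimpleGraph V} (TD : TreeDecomp G ι)

theorem isConvex_setOf_mem_bag (u : V) : TD.isTree.IsConvex {i | u ∈ TD.bag i} :=
  TD.isTree.isConvex_of_connected (TD.bags_connected u)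

theorem exists_mem_support_mem_bag {u u' : V} (q : G.Walk u u') {i j w : ι}
    (hu : u ∈ TD.bag i) (hu' : u' ∈ TD.bag j) (hw : w ∈ (TD.isTree.path i j).support) :
    ∃ x ∈ q.support, x ∈ TD.bag w := by
  induction q generalizing i with
  | nil => exact ⟨_, Walk.start_mem_support _, TD.isConvex_setOf_mem_bag _ hu hu' w hw⟩
  | cons hadj p ih =>
    obtain ⟨c, hc, hc'⟩ := TD.covers_edge hadj
    rcases TD.isTree.mem_support_path_or hw c with h | h
    · exact ⟨_, Walk.start_mem_support _, TD.isConvex_setOf_mem_bag _ hu hc w h⟩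
    · obtain ⟨x, hx, hxw⟩ := ih hc' hu' h
      exact ⟨x, Walk.support_cons _ _ ▸ List.mem_cons_of_mem _ hx, hxw⟩

def bagsNear (v : V) (R : ℕ) : Set ι := {i | ∃ u ∈ TD.bag i, G.dist v u ≤ R}

theorem isConvex_bagsNear (hG : G.Connected) (v : V) (R : ℕ) :
    TD.isTree.IsConvex (TD.bagsNear v R) := by
  classical
  rintro i j ⟨ui, hui, hdi⟩ ⟨uj, huj, hdj⟩ w hw
  obtain ⟨p₁, -, hl₁⟩ := hG.exists_path_of_dist ui v
  obtain ⟨p₂, -, hl₂⟩ := hG.exists_path_of_dist v uj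
  obtain ⟨x, hx, hxw⟩ := TD.exists_mem_support_mem_bag (p₁.append p₂) hui huj hw
  refine ⟨x, hxw, ?_⟩
  rcases (Walk.mem_support_append_iff _ _).1 hx with hx | hx
  · calc G.dist v x = G.dist x v := dist_comm
      _ ≤ (p₁.dropUntil x hx).length := dist_le _
      _ ≤ p₁.length := Walk.length_dropUntil_le_length _ _
      _ = G.dist v ui := hl₁.trans dist_comm
      _ ≤ R := hdi
  · calc G.dist v x ≤ (p₂.takeUntil x hx).length := dist_le _
      _ ≤ p₂.length := Walk.length_takeUntil_le_length _ _
      _ ≤ R := hl₂ ▸ hdj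

theorem exists_isCovSubtree_ncard_le [Finite ι] (r : V → ℕ) (φ : ℕ) :
    ∃ S, IsCovSubtree TD r φ S ∧ ∀ S', IsCovSubtree TD r φ S' → S.ncard ≤ S'.ncard := by
  have := TD.isTree.connected.nonempty
  have huniv : IsCovSubtree TD r φ Set.univ := by
    refine ⟨TD.isTree.connected_induce_of_isConvex (fun _ _ _ _ _ _ => trivial)
      Set.univ_nonempty, fun v => ?_⟩
    obtain ⟨i, hi⟩ := TD.covers_vertex v
    exact ⟨i, trivial, v, hi, by simp⟩
  exact Set.exists_min_image _ Set.ncard (Set.toFinite _) ⟨_, huniv⟩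

variable {TD} {r : V → ℕ} {φ : ℕ}

theorem isCovSubtree_singleton {i : ι} (hi : ∀ v, i ∈ TD.bagsNear v (r v + φ)) :
    IsCovSubtree TD r φ {i} :=
  ⟨by rw [induce_singleton_eq_top]; exact connected_top, fun v => ⟨i, rfl, hi v⟩⟩

theorem exists_private_of_bagDegree_eq_one [Finite ι] {S : Set ι} {B B' : ι}
    (hS : IsCovSubtree TD r φ S) (hB : B ∈ S)
    (hmin : ∀ S', IsCovSubtree TD r φ S' → B ∈ S' → S.ncard ≤ S'.ncard)
    (hB' : B' ∈ S) (hB'B : B' ≠ B) (hdeg : bagDegree TD S B' = 1) :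
    ∃ v₀, ∀ i ∈ S, i ∈ TD.bagsNear v₀ (r v₀ + φ) → i = B' := by
  obtain ⟨n, hn⟩ := Set.ncard_eq_one.1 hdeg
  have hnS : n ∈ {j | j ∈ S ∧ TD.tree.Adj B' j} := hn ▸ rfl
  have hconv := hS.isConvex.diff_singleton hB' hnS.2 fun j hj hadj =>
    (hn ▸ (⟨hj, hadj⟩ : j ∈ {j | j ∈ S ∧ TD.tree.Adj B' j}) : j ∈ ({n} : Set ι))
  have hBS : B ∈ S \ {B'} := ⟨hB, hB'B.symm⟩
  by_contra! hcov
  have hcov' : IsCovSubtree TD r φ (S \ {B'}) :=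
    ⟨TD.isTree.connected_induce_of_isConvex hconv ⟨B, hBS⟩, fun v =>
      let ⟨i, hi, hiN, hiB'⟩ := hcov v
      ⟨i, ⟨hi, hiB'⟩, hiN⟩⟩
  have hlt := Set.ncard_sdiff_singleton_lt_of_mem hB'
  exact (hmin _ hcov' hBS).not_gt hlt

end TreeDecomp

theorem leaf_of_min_covering_subtree_in_min_covering_subtree_general
    {V ι : Type} [Fintype ι]
    (G : SimpleGraph V) (hconn : G.Connected) (TD : TreeDecomp G ι)
    (r : V → ℕ) (B : ι) (TB : Set ι)
    (hTB : IsCovSubtree TD r 0 TB) (hBmem : B ∈ TB)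
    (hmin : ∀ T'' : Set ι, IsCovSubtree TD r 0 T'' → B ∈ T'' → TB.ncard ≤ T''.ncard) :
    ∀ B' ∈ TB, B' ≠ B → bagDegree TD TB B' = 1 →
      ∃ Tr : Set ι, IsCovSubtree TD r 0 Tr ∧
        (∀ T'' : Set ι, IsCovSubtree TD r 0 T'' → Tr.ncard ≤ T''.ncard) ∧
        B' ∈ Tr := by
  intro B' hB' hB'B hdeg
  obtain ⟨v₀, hv₀⟩ := TD.exists_private_of_bagDegree_eq_one hTB hBmem hmin hB' hB'B hdeg
  obtain ⟨Tr, hTr, hTrmin⟩ := TD.exists_isCovSubtree_ncard_le r 0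
  by_cases hB'Tr : B' ∈ Tr
  · exact ⟨Tr, hTr, hTrmin, hB'Tr⟩
  have hB'near : ∀ v, B' ∈ TD.bagsNear v (r v + 0) :=
    TD.isTree.forall_mem_of_unique_mem_of_notMem (fun v => TD.isConvex_bagsNear hconn v _)
      hTB.isConvex hTr.isConvex hTB.2 hTr.2 hB' hB'Tr hv₀
  have := hconn.nonempty
  refine ⟨{B'}, TreeDecomp.isCovSubtree_singleton hB'near, fun T'' hT'' => ?_, rfl⟩
  rw [Set.ncard_singleton]
  exact (Set.ncard_pos (Set.toFinite _)).2 hT''.nonempty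

/-- Let `T_B` be an `r`-covering subtree of a tree-decomposition of
`G` containing the bag `B` with the fewest bags among all such subtrees, where `T_B`
has at least two bags.  Then for each leaf `B' ≠ B` of `T_B` there is a minimum
`r`-covering subtree `T_r` of the decomposition containing `B'`. -/
theorem leaf_of_min_covering_subtree_in_min_covering_subtree
    {V ι : Type} [Fintype V] [Fintype ι]
    (G : SimpleGraph V) (hconn : G.Connected) (TD : TreeDecomp G ι)
    (r : V → ℕ) (B : ι) (TB : Set ι)
    (hTB : IsCovSubtree TD r 0 TB) (hBmem : B ∈ TB)
    (hmin : ∀ T'' : Set ι, IsCovSubtree TD r 0 T'' → B ∈ T'' → TB.ncard ≤ T''.ncard)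
    (hcard : 1 < TB.ncard) :
    ∀ B' ∈ TB, B' ≠ B → bagDegree TD TB B' = 1 →
      ∃ Tr : Set ι, IsCovSubtree TD r 0 Tr ∧
        (∀ T'' : Set ι, IsCovSubtree TD r 0 T'' → Tr.ncard ≤ T''.ncard) ∧
        B' ∈ Tr :=
  leaf_of_min_covering_subtree_in_min_covering_subtree_general G hconn TD r B TB hTB hBmem hmin
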